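/- For every integer n with 3 ≤ n ≤ 9, the spider Sp(2^[n]) admits a local antimagic total labeling whose induced vertex weights take exactly 2 distinct values; hence χ_lat(Sp(2^[n])) = 2 for 3 ≤ n ≤ 9. -/
import Mathlib


open Finset

variable {V : Type*} [Fintype V] [DecidableEq V]

/-- The weight of a vertex `u` under the total labeling given by vertex labels `fv`
and edge labels `fe` : `w(u) = f(u) + \sum_{e incident to u} f(e)`. -/
def latWeight (G : SimpleGraph V) [DecidableRel G.Adj]
    (fv : V → ℕ) (fe : Sym2 V → ℕ) (u : V) : ℕ :=
  fv u + ∑ v ∈ G.neighborFinset u, fe s(u, v)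

/-- `fv, fe` together form a bijection from `V(G) ∪ E(G)` onto `{1, …, p + q}`,
where `p` is the order and `q` is the size of `G`. -/
def IsTotalLabeling (G : SimpleGraph V) [DecidableRel G.Adj]
    (fv : V → ℕ) (fe : Sym2 V → ℕ) : Prop :=
  Set.BijOn (Sum.elim fv (fun e : G.edgeSet => fe (e : Sym2 V))) Set.univ
    (Set.Icc 1 (Fintype.card V + G.edgeFinset.card))

/-- A local antimagic total labeling of `G` : a bijective total labeling such that any two
adjacent vertices get distinct weights. -/
def IsLocalAntimagicTotal (G : SimpleGraph V) [DecidableRel G.Adj]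
    (fv : V → ℕ) (fe : Sym2 V → ℕ) : Prop :=
  IsTotalLabeling G fv fe ∧
    ∀ ⦃u v : V⦄, G.Adj u v → latWeight G fv fe u ≠ latWeight G fv fe v

/-- The local antimagic total chromatic number `χ_lat(G)` : the minimum number of distinct
vertex weights taken over all local antimagic total labelings of `G`. -/
noncomputable def chiLat (G : SimpleGraph V) [DecidableRel G.Adj] : ℕ :=
  sInf {c | ∃ fv fe, IsLocalAntimagicTotal G fv fe ∧
    (Finset.univ.image (latWeight G fv fe)).card = c}

instance {W : Type*} (r : W → W → Prop) [DecidableEq W] [DecidableRel r] :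
    DecidableRel (SimpleGraph.fromRel r).Adj :=
  fun a b => decidable_of_iff _ (SimpleGraph.fromRel_adj r a b).symm

/-- Adjacency for the spider `Sp(2^[n])` : the center `none` is adjacent to each middle
vertex `some (i, false)`, and `some (i, false)` is adjacent to the leaf `some (i, true)`. -/
def spider2R (n : ℕ) : Option (Fin n × Bool) → Option (Fin n × Bool) → Bool
  | none, some (_, false) => true
  | some (i, false), some (j, true) => decide (i = j)
  | _, _ => false

/-- The spider `Sp(2^[n])` with `n` legs of length `2`. -/
abbrev spider2 (n : ℕ) : SimpleGraph (Option (Fin n × Bool)) :=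
  SimpleGraph.fromRel (fun a b => spider2R n a b = true)

set_option linter.unusedSectionVars false in
/-- A totally injective labeling into `{1, …, p+q}` is a total labeling (by cardinality). -/
lemma isTotalLabeling_of (G : SimpleGraph V) [DecidableRel G.Adj] (fv : V → ℕ) (fe : Sym2 V → ℕ)
    (hinj : Function.Injective (Sum.elim fv (fun e : G.edgeSet => fe (e : Sym2 V))))
    (hmem : ∀ x, Sum.elim fv (fun e : G.edgeSet => fe (e : Sym2 V)) x ∈
      Finset.Icc 1 (Fintype.card V + G.edgeFinset.card)) :
    IsTotalLabeling G fv fe := by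
  set N := Fintype.card V + G.edgeFinset.card with hN
  set g := Sum.elim fv (fun e : G.edgeSet => fe (e : Sym2 V)) with hg
  have hcard : Fintype.card (V ⊕ G.edgeSet) = N := by
    rw [Fintype.card_sum, hN, SimpleGraph.edgeFinset, Set.toFinset_card]
  have himg : Finset.univ.image g = Finset.Icc 1 N := by
    apply Finset.eq_of_subset_of_card_le
    · intro y hy
      obtain ⟨x, -, rfl⟩ := Finset.mem_image.mp hy
      exact hmem x
    · rw [Finset.card_image_of_injective _ hinj, Finset.card_univ, hcard, Nat.card_Icc]
      omega
  refine ⟨fun x _ => ?_, hinj.injOn, fun y hy => ?_⟩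
  · have := hmem x
    simp only [Finset.mem_Icc] at this
    exact ⟨this.1, this.2⟩
  · have hy' : y ∈ Finset.Icc 1 N := by
      simp only [Set.mem_Icc] at hy
      exact Finset.mem_Icc.mpr hy
    rw [← himg] at hy'
    obtain ⟨x, -, hx⟩ := Finset.mem_image.mp hy'
    exact ⟨x, Set.mem_univ x, hx⟩

/-- Vertex labeling of the spider : center gets `t`, middle vertices `av`, leaves `bv`. -/
def spFv {n : ℕ} (t : ℕ) (av bv : Fin n → ℕ) : Option (Fin n × Bool) → ℕ
  | none => t
  | some (i, false) => av i
  | some (i, true) => bv i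

/-- One-directional edge-label helper : `cv i` on `x u_i`, `dv i` on `u_i v_i`. -/
def spG {n : ℕ} (cv dv : Fin n → ℕ) :
    Option (Fin n × Bool) → Option (Fin n × Bool) → ℕ
  | none, some (i, false) => cv i
  | some (i, false), some (j, true) => if i = j then dv i else 0
  | _, _ => 0

/-- Symmetrized edge labeling on `Sym2`. -/
def spFe {n : ℕ} (cv dv : Fin n → ℕ) : Sym2 (Option (Fin n × Bool)) → ℕ :=
  Sym2.lift ⟨fun a b => spG cv dv a b + spG cv dv b a, fun _ _ => add_comm _ _⟩

/-- Key reduction : decidable facts about an explicit labeling give both conclusions. -/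
lemma spider2_key (n : ℕ) (hn : 0 < n) (fv : Option (Fin n × Bool) → ℕ)
    (fe : Sym2 (Option (Fin n × Bool)) → ℕ)
    (hinj : Function.Injective (Sum.elim fv (fun e : (spider2 n).edgeSet => fe (e : Sym2 _))))
    (hmem : ∀ x, Sum.elim fv (fun e : (spider2 n).edgeSet => fe (e : Sym2 _)) x ∈
      Finset.Icc 1 (Fintype.card (Option (Fin n × Bool)) + (spider2 n).edgeFinset.card))
    (hne : ∀ ⦃u v⦄, (spider2 n).Adj u v →
      latWeight (spider2 n) fv fe u ≠ latWeight (spider2 n) fv fe v)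
    (hcard : (Finset.univ.image (latWeight (spider2 n) fv fe)).card = 2) :
    (∃ fv fe, IsLocalAntimagicTotal (spider2 n) fv fe ∧
      (Finset.univ.image (latWeight (spider2 n) fv fe)).card = 2) ∧
    chiLat (spider2 n) = 2 := by
  have hl : IsLocalAntimagicTotal (spider2 n) fv fe :=
    ⟨isTotalLabeling_of _ _ _ hinj hmem, hne⟩
  refine ⟨⟨fv, fe, hl, hcard⟩, ?_⟩
  have hadj : (spider2 n).Adj none (some (⟨0, hn⟩, false)) := by
    rw [SimpleGraph.fromRel_adj]
    exact ⟨by simp, Or.inl rfl⟩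
  have hmem2 : 2 ∈ {c | ∃ fv fe, IsLocalAntimagicTotal (spider2 n) fv fe ∧
      (Finset.univ.image (latWeight (spider2 n) fv fe)).card = c} := ⟨fv, fe, hl, hcard⟩
  unfold chiLat
  refine le_antisymm (Nat.sInf_le hmem2) (le_csInf ⟨2, hmem2⟩ ?_)
  rintro c ⟨fv', fe', ⟨-, hne'⟩, rfl⟩
  exact Finset.one_lt_card.mpr
    ⟨_, Finset.mem_image_of_mem _ (Finset.mem_univ none),
     _, Finset.mem_image_of_mem _ (Finset.mem_univ (some (⟨0, hn⟩, false))), hne' hadj⟩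

/-- For every `3 ≤ n ≤ 9`, the spider `Sp(2^[n])` admits a local antimagic total labeling
whose induced vertex weights take exactly `2` distinct values; hence `χ_lat(Sp(2^[n])) = 2`. -/
theorem spider2_two_weights (n : ℕ) (h3 : 3 ≤ n) (h9 : n ≤ 9) :
    (∃ fv fe, IsLocalAntimagicTotal (spider2 n) fv fe ∧
      (Finset.univ.image (latWeight (spider2 n) fv fe)).card = 2) ∧
    chiLat (spider2 n) = 2 := by
  interval_cases n
  · exact spider2_key 3 (by norm_num)
      (spFv 1 ![13,8,2] ![10,6,5]) (spFe ![3,4,9] ![7,11,12])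
      (by decide) (by decide) (by decide) (by decide)
  · exact spider2_key 4 (by norm_num)
      (spFv 1 ![11,6,13,3] ![15,7,16,14]) (spFe ![5,2,4,12] ![9,17,8,10])
      (by decide) (by decide) (by decide) (by decide)
  · exact spider2_key 5 (by norm_num)
      (spFv 1 ![9,8,4,2,10] ![17,20,14,18,21]) (spFe ![3,7,5,11,6] ![16,13,19,15,12])
      (by decide) (by decide) (by decide) (by decide)
  · exact spider2_key 6 (by norm_num)
      (spFv 6 ![4,11,9,7,8,13] ![23,20,17,24,18,25])
      (spFe ![12,2,1,10,3,5] ![16,19,22,15,21,14])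
      (by decide) (by decide) (by decide) (by decide)
  · exact spider2_key 7 (by norm_num)
      (spFv 3 ![15,11,9,8,14,5,13] ![29,20,28,19,27,22,21])
      (spFe ![7,2,12,4,6,10,1] ![16,25,17,26,18,23,24])
      (by decide) (by decide) (by decide) (by decide)
  · exact spider2_key 8 (by norm_num)
      (spFv 11 ![9,17,15,12,14,13,6,16] ![20,30,29,32,26,28,24,33])
      (spFe ![1,3,4,10,2,5,8,7] ![31,21,22,19,25,23,27,18])
      (by decide) (by decide) (by decide) (by decide)
  · exact spider2_key 9 (by norm_num)
      (spFv 10 ![31,16,13,11,12,15,24,17,14] ![37,23,21,20,22,26,36,30,28])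
      (spFe ![1,2,3,4,5,6,7,8,9] ![18,32,34,35,33,29,19,25,27])
      (by decide) (by decide) (by decide) (by decide)
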